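/- arXiv:0812.3350 — 3 statements merged into one kernel-verified Lean document; each statement's English description precedes it below -/
import Mathlib

section
/- Let r ≥ 1 be an integer, and for i = 1, …, r let a_i > 0 and b_i > 0 be real numbers, and let μ_1 > μ_2 > ⋯ > μ_r > 0 and 0 > ν_1 > ν_2 > ⋯ > ν_r be real numbers. Set γ_i = a_i·μ_i + b_i·ν_i and assume Σ_{j=1}^{i} γ_j ≤ 0 for every 1 ≤ i ≤ r and Σ_{j=1}^{r} γ_j = 0. Then (Σ_{i=1}^{r} a_iμ_i)/(Σ_{i=1}^{r} a_i) − (Σ_{i=1}^{r} b_iν_i)/(Σ_{i=1}^{r} b_i) ≤ max_{1 ≤ i ≤ r} (μ_i − ν_i), and the inequality is strict unless r = 1. -/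
private lemma abel_aux (r : ℕ) (f w : ℕ → ℝ)
    (hS : ∀ i, 1 ≤ i → i ≤ r → ∑ j ∈ Finset.Icc 1 i, f j ≤ 0)
    (hw : ∀ i, 1 ≤ i → i + 1 ≤ r → w (i + 1) ≤ w i) :
    ∀ n, 1 ≤ n → n ≤ r →
      ∑ j ∈ Finset.Icc 1 n, f j * w j ≤ (∑ j ∈ Finset.Icc 1 n, f j) * w n := by
  intro n
  induction n with
  | zero => intro h; omega
  | succ m ih =>
    intro _ hmr
    rcases Nat.eq_or_lt_of_le (show 1 ≤ m + 1 by omega) with h1 | h1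
    · simp [← h1]
    · have hm1 : 1 ≤ m := by omega
      have hmr' : m ≤ r := by omega
      have hIH := ih hm1 hmr'
      rw [Finset.sum_Icc_succ_top (by omega : 1 ≤ m + 1),
          Finset.sum_Icc_succ_top (by omega : 1 ≤ m + 1)]
      have hSm := hS m hm1 hmr'
      have hwm := hw m hm1 (by omega)
      nlinarith [mul_le_mul_of_nonpos_left hwm hSm]

private lemma abel_le (r : ℕ) (f w : ℕ → ℝ)
    (hS : ∀ i, 1 ≤ i → i ≤ r → ∑ j ∈ Finset.Icc 1 i, f j ≤ 0)
    (hSr : ∑ j ∈ Finset.Icc 1 r, f j = 0)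
    (hw : ∀ i, 1 ≤ i → i + 1 ≤ r → w (i + 1) ≤ w i) (hr : 1 ≤ r) :
    ∑ j ∈ Finset.Icc 1 r, f j * w j ≤ 0 := by
  have := abel_aux r f w hS hw r hr le_rfl
  rw [hSr] at this
  simpa using this

private lemma var_key (s : Finset ℕ) (w f : ℕ → ℝ) :
    ∑ i ∈ s, w i * ((∑ j ∈ s, w j) * f i - ∑ j ∈ s, w j * f j) ^ 2
      = (∑ j ∈ s, w j) *
        ((∑ j ∈ s, w j) * (∑ j ∈ s, w j * f j ^ 2) - (∑ j ∈ s, w j * f j) ^ 2) := by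
  have h : ∀ i ∈ s, w i * ((∑ j ∈ s, w j) * f i - ∑ j ∈ s, w j * f j) ^ 2
      = (∑ j ∈ s, w j) ^ 2 * (w i * f i ^ 2)
        - (2 * (∑ j ∈ s, w j) * (∑ j ∈ s, w j * f j)) * (w i * f i)
        + (∑ j ∈ s, w j * f j) ^ 2 * w i := by
    intro i _; ring
  rw [Finset.sum_congr rfl h]
  rw [Finset.sum_add_distrib, Finset.sum_sub_distrib, ← Finset.mul_sum,
      ← Finset.mul_sum, ← Finset.mul_sum]
  ring

private lemma var_le (s : Finset ℕ) (w f : ℕ → ℝ) (hw : ∀ i ∈ s, 0 < w i)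
    (hW : 0 < ∑ j ∈ s, w j) :
    (∑ j ∈ s, w j * f j) ^ 2 ≤ (∑ j ∈ s, w j) * ∑ j ∈ s, w j * f j ^ 2 := by
  have h0 : 0 ≤ ∑ i ∈ s, w i * ((∑ j ∈ s, w j) * f i - ∑ j ∈ s, w j * f j) ^ 2 :=
    Finset.sum_nonneg fun i hi => mul_nonneg (hw i hi).le (sq_nonneg _)
  rw [var_key] at h0
  nlinarith

private lemma var_lt (s : Finset ℕ) (w f : ℕ → ℝ) (hw : ∀ i ∈ s, 0 < w i)
    {p q : ℕ} (hp : p ∈ s) (hq : q ∈ s) (hpq : f p ≠ f q) :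
    (∑ j ∈ s, w j * f j) ^ 2 < (∑ j ∈ s, w j) * ∑ j ∈ s, w j * f j ^ 2 := by
  have hW : 0 < ∑ j ∈ s, w j :=
    Finset.sum_pos' (fun i hi => (hw i hi).le) ⟨p, hp, hw p hp⟩
  have hk : ∃ k ∈ s, (∑ j ∈ s, w j) * f k ≠ ∑ j ∈ s, w j * f j := by
    by_cases h : (∑ j ∈ s, w j) * f p = ∑ j ∈ s, w j * f j
    · refine ⟨q, hq, fun hq' => hpq ?_⟩
      have := h.trans hq'.symm
      exact mul_left_cancel₀ hW.ne' this
    · exact ⟨p, hp, h⟩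
  obtain ⟨k, hk, hk'⟩ := hk
  have h0 : 0 < ∑ i ∈ s, w i * ((∑ j ∈ s, w j) * f i - ∑ j ∈ s, w j * f j) ^ 2 :=
    Finset.sum_pos' (fun i hi => mul_nonneg (hw i hi).le (sq_nonneg _))
      ⟨k, hk, mul_pos (hw k hk) (pow_two_pos_of_ne_zero (sub_ne_zero.mpr hk'))⟩
  rw [var_key] at h0
  nlinarith

/-- Numerical core of Claim 6.6 in the proof of Theorem 6.4. Pieces are indexed by
`1, …, r`. -/
theorem stmt_2 (r : ℕ) (hr : 1 ≤ r) (a b μ ν : ℕ → ℝ)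
    (ha : ∀ i, 1 ≤ i → i ≤ r → 0 < a i)
    (hb : ∀ i, 1 ≤ i → i ≤ r → 0 < b i)
    (hμ : ∀ i j, 1 ≤ i → i < j → j ≤ r → μ j < μ i)
    (hμpos : 0 < μ r)
    (hνneg : ν 1 < 0)
    (hν : ∀ i j, 1 ≤ i → i < j → j ≤ r → ν j < ν i)
    (hγpartial : ∀ i, 1 ≤ i → i ≤ r →
      ∑ j ∈ Finset.Icc 1 i, (a j * μ j + b j * ν j) ≤ 0)
    (hγtotal : ∑ j ∈ Finset.Icc 1 r, (a j * μ j + b j * ν j) = 0) :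
    (∑ i ∈ Finset.Icc 1 r, a i * μ i) / (∑ i ∈ Finset.Icc 1 r, a i)
      - (∑ i ∈ Finset.Icc 1 r, b i * ν i) / (∑ i ∈ Finset.Icc 1 r, b i)
      ≤ (Finset.Icc 1 r).sup' (by simp [Finset.nonempty_Icc]; omega)
          (fun i => μ i - ν i)
    ∧ (r ≠ 1 →
      (∑ i ∈ Finset.Icc 1 r, a i * μ i) / (∑ i ∈ Finset.Icc 1 r, a i)
        - (∑ i ∈ Finset.Icc 1 r, b i * ν i) / (∑ i ∈ Finset.Icc 1 r, b i)
        < (Finset.Icc 1 r).sup' (by simp [Finset.nonempty_Icc]; omega)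
            (fun i => μ i - ν i)) := by
  set s := Finset.Icc 1 r with hs
  have hne : s.Nonempty := ⟨1, Finset.mem_Icc.mpr ⟨le_rfl, hr⟩⟩
  set M := s.sup' hne (fun i => μ i - ν i) with hM
  -- basic facts about indices in s
  have hmem : ∀ i ∈ s, 1 ≤ i ∧ i ≤ r := fun i hi => Finset.mem_Icc.mp hi
  have hμi : ∀ i ∈ s, 0 < μ i := by
    intro i hi
    obtain ⟨h1, h2⟩ := hmem i hi
    rcases eq_or_lt_of_le h2 with h | h
    · rw [h]; exact hμpos
    · exact hμpos.trans (hμ i r h1 h le_rfl)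
  have hνi : ∀ i ∈ s, ν i < 0 := by
    intro i hi
    obtain ⟨h1, h2⟩ := hmem i hi
    rcases eq_or_lt_of_le h1 with h | h
    · rw [← h]; exact hνneg
    · exact (hν 1 i le_rfl h h2).trans hνneg
  have hMi : ∀ i ∈ s, μ i - ν i ≤ M := fun i hi => Finset.le_sup' (fun i => μ i - ν i) hi
  -- names for sums
  set P := ∑ i ∈ s, a i * μ i with hP
  set Q := ∑ i ∈ s, b i * ν i with hQdef
  set Sa := ∑ i ∈ s, a i with hSa
  set Sb := ∑ i ∈ s, b i with hSb
  set Xa := ∑ i ∈ s, a i * μ i ^ 2 with hXa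
  set Xb := ∑ i ∈ s, b i * ν i ^ 2 with hXb
  have hSapos : 0 < Sa := Finset.sum_pos (fun i hi => ha i (hmem i hi).1 (hmem i hi).2) hne
  have hSbpos : 0 < Sb := Finset.sum_pos (fun i hi => hb i (hmem i hi).1 (hmem i hi).2) hne
  have hQ : Q = -P := by
    have := hγtotal
    rw [Finset.sum_add_distrib] at this
    rw [hQdef, hP]; linarith
  have hPpos : 0 < P := by
    have : 0 < ∑ i ∈ s, -(b i * ν i) := by
      refine Finset.sum_pos (fun i hi => ?_) hne
      have := mul_neg_of_pos_of_neg (hb i (hmem i hi).1 (hmem i hi).2) (hνi i hi)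
      linarith
    rw [Finset.sum_neg_distrib] at this
    rw [← hQdef] at this
    linarith [hQ]
  -- Abel summation with weights μ and ν
  have habelμ : ∑ i ∈ s, (a i * μ i + b i * ν i) * μ i ≤ 0 :=
    abel_le r _ μ hγpartial hγtotal
      (fun i h1 h2 => (hμ i (i + 1) h1 (by omega) h2).le) hr
  have habelν : ∑ i ∈ s, (a i * μ i + b i * ν i) * ν i ≤ 0 :=
    abel_le r _ ν hγpartial hγtotal
      (fun i h1 h2 => (hν i (i + 1) h1 (by omega) h2).le) hr
  set Ca := ∑ i ∈ s, a i * (μ i * ν i) with hCa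
  set Cb := ∑ i ∈ s, b i * (μ i * ν i) with hCb
  have hE1 : Xa + Cb ≤ 0 := by
    have h : ∑ i ∈ s, (a i * μ i + b i * ν i) * μ i
        = ∑ i ∈ s, (a i * μ i ^ 2 + b i * (μ i * ν i)) :=
      Finset.sum_congr rfl fun i _ => by ring
    rw [h, Finset.sum_add_distrib] at habelμ
    rw [hXa, hCb]; linarith
  have hE2 : Ca + Xb ≤ 0 := by
    have h : ∑ i ∈ s, (a i * μ i + b i * ν i) * ν i
        = ∑ i ∈ s, (a i * (μ i * ν i) + b i * ν i ^ 2) :=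
      Finset.sum_congr rfl fun i _ => by ring
    rw [h, Finset.sum_add_distrib] at habelν
    rw [hCa, hXb]; linarith
  -- termwise bound
  have hterm : ∀ i ∈ s,
      -(a i * (μ i * ν i)) - b i * (μ i * ν i)
        ≤ M * (a i * μ i) - M * (b i * ν i) - a i * μ i ^ 2 - b i * ν i ^ 2 := by
    intro i hi
    have h1 := ha i (hmem i hi).1 (hmem i hi).2
    have h2 := hb i (hmem i hi).1 (hmem i hi).2
    have h3 := hμi i hi
    have h4 := hνi i hi
    have h5 := hMi i hi
    nlinarith [mul_nonneg (mul_pos h1 h3).le (by linarith : (0:ℝ) ≤ M - μ i + ν i),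
      mul_nonneg (mul_pos h2 (by linarith : (0:ℝ) < -ν i)).le
        (by linarith : (0:ℝ) ≤ M - μ i + ν i)]
  have hE3 : -Ca - Cb ≤ M * P - M * Q - Xa - Xb := by
    have h := Finset.sum_le_sum hterm
    have hl : ∑ i ∈ s, (-(a i * (μ i * ν i)) - b i * (μ i * ν i)) = -Ca - Cb := by
      rw [Finset.sum_sub_distrib, Finset.sum_neg_distrib, hCa, hCb]
    have hrr : ∑ i ∈ s,
        (M * (a i * μ i) - M * (b i * ν i) - a i * μ i ^ 2 - b i * ν i ^ 2)
        = M * P - M * Q - Xa - Xb := by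
      rw [Finset.sum_sub_distrib, Finset.sum_sub_distrib, Finset.sum_sub_distrib,
        ← Finset.mul_sum, ← Finset.mul_sum, hP, hQdef, hXa, hXb]
    rw [hl, hrr] at h
    exact h
  have hX : Xa + Xb ≤ M * P := by
    have : M * Q = -(M * P) := by rw [hQ]; ring
    linarith [hE1, hE2, hE3]
  -- Cauchy–Schwarz (variance form)
  have hCSa : P ^ 2 ≤ Sa * Xa := var_le s a μ (fun i hi => ha i (hmem i hi).1 (hmem i hi).2) hSapos
  have hCSb : Q ^ 2 ≤ Sb * Xb := var_le s b ν (fun i hi => hb i (hmem i hi).1 (hmem i hi).2) hSbpos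
  have hQ2 : Q ^ 2 = P ^ 2 := by rw [hQ]; ring
  have hCSb' : P ^ 2 ≤ Sb * Xb := by rw [← hQ2]; exact hCSb
  have h2 := mul_le_mul_of_nonneg_right hCSb' hSapos.le
  have h3 := mul_le_mul_of_nonneg_right hX (mul_pos hSapos hSbpos).le
  constructor
  · rw [div_sub_div _ _ hSapos.ne' hSbpos.ne', div_le_iff₀ (mul_pos hSapos hSbpos), hQ]
    have h1 := mul_le_mul_of_nonneg_right hCSa hSbpos.le
    have hbig : P * (P * Sb - Sa * -P) ≤ P * (M * (Sa * Sb)) := by nlinarith [h1, h2, h3]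
    exact le_of_mul_le_mul_left hbig hPpos
  · intro hr1
    have h2r : 2 ≤ r := by omega
    have h1s : (1 : ℕ) ∈ s := Finset.mem_Icc.mpr ⟨le_rfl, hr⟩
    have h2s : (2 : ℕ) ∈ s := Finset.mem_Icc.mpr ⟨by omega, h2r⟩
    have hμ12 : μ 1 ≠ μ 2 := (hμ 1 2 le_rfl one_lt_two h2r).ne'
    have hCSa' : P ^ 2 < Sa * Xa :=
      var_lt s a μ (fun i hi => ha i (hmem i hi).1 (hmem i hi).2) h1s h2s hμ12
    rw [div_sub_div _ _ hSapos.ne' hSbpos.ne', div_lt_iff₀ (mul_pos hSapos hSbpos), hQ]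
    have h1 := mul_lt_mul_of_pos_right hCSa' hSbpos
    have hbig : P * (P * Sb - Sa * -P) < P * (M * (Sa * Sb)) := by linarith [h1, h2, h3]
    exact lt_of_mul_lt_mul_left hbig hPpos.le
end

section
/- Let κ ≥ 2 be an integer, and for i = 1, …, κ let a_i > 0 be real numbers and μ_1 > μ_2 > ⋯ > μ_κ > 0, 0 > ν_1 > ν_2 > ⋯ > ν_κ be real numbers. Define the virtual ranks ρ_i = −a_iμ_i/ν_i (which are positive), the partial sums s_j = a_1 + ⋯ + a_j and t_j = ρ_1 + ⋯ + ρ_j, the averages Υ_j = (Σ_{i≤j} a_iμ_i)/s_j and Ψ_j = (Σ_{i≤j} ρ_iν_i)/t_j, and set δ_j = Υ_j − Ψ_j and Δ_j = μ_j − ν_j. Then δ_κ ≤ max{δ_{κ−1}, Δ_κ}, with equality if and only if δ_{κ−1} = Δ_κ and a_κ·t_κ = ρ_κ·s_κ. -/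
lemma core_aux (X Y s t a r : ℝ) (hX : 0 < X) (hY : 0 < Y) (hs : 0 < s) (ht : 0 < t)
    (ha : 0 < a) (hr : 0 < r) (h : X/s + X/t ≤ Y/a + Y/r) :
    (X+Y)/(s+a) + (X+Y)/(t+r) ≤ Y/a + Y/r
    ∧ ((X+Y)/(s+a) + (X+Y)/(t+r) = Y/a + Y/r ↔ (X/s + X/t = Y/a + Y/r ∧ a*t = r*s)) := by
  have hst : (0:ℝ) < s*t := by positivity
  have har : (0:ℝ) < a*r := by positivity
  have hD3 : (0:ℝ) < (s+a)*(t+r) := by positivity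
  have hstp : (0:ℝ) < s+t := by linarith
  have hall : (0:ℝ) < s+t+a+r := by linarith
  have e1 : X/s + X/t = X*(s+t)/(s*t) := by field_simp; ring
  have e2 : Y/a + Y/r = Y*(a+r)/(a*r) := by field_simp; ring
  have e3 : (X+Y)/(s+a) + (X+Y)/(t+r) = (X+Y)*((s+a)+(t+r))/((s+a)*(t+r)) := by
    field_simp; ring
  rw [e1, e2] at h ⊢
  rw [e3]
  have h' : X*(s+t)*(a*r) ≤ Y*(a+r)*(s*t) := (div_le_div_iff₀ hst har).mp h
  have hn1 : 0 ≤ (s+t+a+r)*(Y*(a+r)*(s*t) - X*(s+t)*(a*r)) :=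
    mul_nonneg hall.le (by linarith)
  have hn2 : 0 ≤ Y*(a*t - r*s)^2 := mul_nonneg hY.le (sq_nonneg _)
  constructor
  · rw [div_le_div_iff₀ hD3 har]
    have key : (X+Y)*((s+a)+(t+r))*(a*r)*(s+t) ≤ Y*(a+r)*((s+a)*(t+r))*(s+t) := by
      nlinarith [hn1, hn2]
    exact le_of_mul_le_mul_right key hstp
  · constructor
    · intro he
      have he' : (X+Y)*((s+a)+(t+r))*(a*r) = Y*(a+r)*((s+a)*(t+r)) :=
        (div_eq_div_iff hD3.ne' har.ne').mp he
      have hsum : (s+t+a+r)*(Y*(a+r)*(s*t) - X*(s+t)*(a*r)) + Y*(a*t - r*s)^2 = 0 := by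
        linear_combination (-(s+t))*he'
      have hz2 : Y*(a*t-r*s)^2 = 0 := by linarith
      have hz1 : (s+t+a+r)*(Y*(a+r)*(s*t) - X*(s+t)*(a*r)) = 0 := by linarith
      have hat : a*t = r*s := by
        have h2 : (a*t-r*s)^2 = 0 := by
          rcases mul_eq_zero.mp hz2 with h0 | h0
          · exact absurd h0 hY.ne'
          · exact h0
        have := pow_eq_zero_iff (two_ne_zero (α := ℕ)) |>.mp h2
        linarith
      have hPQ : X*(s+t)/(s*t) = Y*(a+r)/(a*r) := by
        rw [div_eq_div_iff hst.ne' har.ne']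
        have hsub : Y*(a+r)*(s*t) - X*(s+t)*(a*r) = 0 := by
          rcases mul_eq_zero.mp hz1 with h0 | h0
          · exact absurd h0 hall.ne'
          · exact h0
        linarith
      exact ⟨hPQ, hat⟩
    · rintro ⟨hPQ, hat⟩
      have hPQ' : X*(s+t)*(a*r) = Y*(a+r)*(s*t) :=
        (div_eq_div_iff hst.ne' har.ne').mp hPQ
      rw [div_eq_div_iff hD3.ne' har.ne']
      have hmul : (X+Y)*((s+a)+(t+r))*(a*r)*(s+t) = Y*(a+r)*((s+a)*(t+r))*(s+t) := by
        linear_combination (s+t+a+r)*hPQ' - Y*(a*t-r*s)*hat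
      exact mul_right_cancel₀ hstp.ne' hmul

lemma core (X Y s t a r : ℝ) (hX : 0 < X) (hY : 0 < Y) (hs : 0 < s) (ht : 0 < t)
    (ha : 0 < a) (hr : 0 < r) :
    (X+Y)/(s+a) + (X+Y)/(t+r) ≤ max (X/s + X/t) (Y/a + Y/r)
    ∧ ((X+Y)/(s+a) + (X+Y)/(t+r) = max (X/s + X/t) (Y/a + Y/r)
        ↔ (X/s + X/t = Y/a + Y/r ∧ a*(t+r) = r*(s+a))) := by
  rcases le_total (X/s + X/t) (Y/a + Y/r) with h | h
  · obtain ⟨h1, h2⟩ := core_aux X Y s t a r hX hY hs ht ha hr h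
    rw [max_eq_right h]
    refine ⟨h1, h2.trans ?_⟩
    constructor
    · rintro ⟨u, v⟩; exact ⟨u, by linear_combination v⟩
    · rintro ⟨u, v⟩; exact ⟨u, by linear_combination v⟩
  · obtain ⟨h1, h2⟩ := core_aux Y X a r s t hY hX ha hr hs ht h
    rw [max_eq_left h]
    have e : (X+Y)/(s+a) + (X+Y)/(t+r) = (Y+X)/(a+s) + (Y+X)/(r+t) := by ring
    rw [e]
    refine ⟨h1, h2.trans ?_⟩
    constructor
    · rintro ⟨u, v⟩; exact ⟨u.symm, by linear_combination -v⟩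
    · rintro ⟨u, v⟩; exact ⟨u.symm, by linear_combination -v⟩

open Finset

/-- Numerical core of Claim 6.7 in the proof of Theorem 6.4. Pieces are indexed by
`1, …, κ`. -/
theorem stmt_3 (κ : ℕ) (hκ : 2 ≤ κ)
    (a μ ν ρ s t Υ Ψ δ Δ : ℕ → ℝ)
    (ha : ∀ i, 1 ≤ i → i ≤ κ → 0 < a i)
    (hμ : ∀ i j, 1 ≤ i → i < j → j ≤ κ → μ j < μ i)
    (hμpos : 0 < μ κ)
    (hνneg : ν 1 < 0)
    (hν : ∀ i j, 1 ≤ i → i < j → j ≤ κ → ν j < ν i)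
    (hρ : ∀ i, ρ i = -(a i * μ i) / ν i)
    (hs : ∀ j, s j = ∑ i ∈ Finset.Icc 1 j, a i)
    (ht : ∀ j, t j = ∑ i ∈ Finset.Icc 1 j, ρ i)
    (hΥ : ∀ j, Υ j = (∑ i ∈ Finset.Icc 1 j, a i * μ i) / s j)
    (hΨ : ∀ j, Ψ j = (∑ i ∈ Finset.Icc 1 j, ρ i * ν i) / t j)
    (hδ : ∀ j, δ j = Υ j - Ψ j)
    (hΔ : ∀ j, Δ j = μ j - ν j) :
    δ κ ≤ max (δ (κ - 1)) (Δ κ)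
    ∧ (δ κ = max (δ (κ - 1)) (Δ κ) ↔ δ (κ - 1) = Δ κ ∧ a κ * t κ = ρ κ * s κ) := by
  obtain ⟨k, rfl⟩ : ∃ k, κ = k + 1 := ⟨κ - 1, by omega⟩
  have hk1 : 1 ≤ k := by omega
  have hk' : k + 1 - 1 = k := by omega
  rw [hk']
  -- basic sign facts
  have hμpos' : ∀ i, 1 ≤ i → i ≤ k + 1 → 0 < μ i := by
    intro i h1 h2
    rcases eq_or_lt_of_le h2 with rfl | hlt
    · exact hμpos
    · exact hμpos.trans (hμ i (k+1) h1 hlt le_rfl)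
  have hνneg' : ∀ i, 1 ≤ i → i ≤ k + 1 → ν i < 0 := by
    intro i h1 h2
    rcases eq_or_lt_of_le h1 with rfl | hlt
    · exact hνneg
    · exact (hν 1 i le_rfl hlt h2).trans hνneg
  have hρpos : ∀ i, 1 ≤ i → i ≤ k + 1 → 0 < ρ i := by
    intro i h1 h2
    rw [hρ]
    have h3 : 0 < a i * μ i := mul_pos (ha i h1 h2) (hμpos' i h1 h2)
    exact div_pos_of_neg_of_neg (by linarith) (hνneg' i h1 h2)
  have hρν : ∀ i, 1 ≤ i → i ≤ k + 1 → ρ i * ν i = -(a i * μ i) := by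
    intro i h1 h2
    rw [hρ, div_mul_cancel₀ _ (hνneg' i h1 h2).ne]
  -- splitting sums
  have hsplit : ∀ f : ℕ → ℝ,
      ∑ i ∈ Icc 1 (k+1), f i = (∑ i ∈ Icc 1 k, f i) + f (k+1) :=
    fun f => Finset.sum_Icc_succ_top (by omega) f
  have hne : (Icc 1 k).Nonempty := ⟨1, by simp [hk1]⟩
  have hmem : ∀ i ∈ Icc 1 k, 1 ≤ i ∧ i ≤ k + 1 := by
    intro i hi; rw [mem_Icc] at hi; omega
  -- positivity of partial sums
  have hS' : 0 < ∑ i ∈ Icc 1 k, a i :=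
    Finset.sum_pos (fun i hi => ha i (hmem i hi).1 (hmem i hi).2) hne
  have hT' : 0 < ∑ i ∈ Icc 1 k, ρ i :=
    Finset.sum_pos (fun i hi => hρpos i (hmem i hi).1 (hmem i hi).2) hne
  have hA : 0 < ∑ i ∈ Icc 1 k, a i * μ i :=
    Finset.sum_pos (fun i hi => mul_pos (ha i (hmem i hi).1 (hmem i hi).2)
      (hμpos' i (hmem i hi).1 (hmem i hi).2)) hne
  have hak : 0 < a (k+1) := ha _ (by omega) le_rfl
  have hρk : 0 < ρ (k+1) := hρpos _ (by omega) le_rfl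
  have hB : 0 < a (k+1) * μ (k+1) := mul_pos hak (hμpos' _ (by omega) le_rfl)
  -- sum of ρν is minus sum of aμ
  have hsumρν : ∀ j, j ≤ k + 1 →
      ∑ i ∈ Icc 1 j, ρ i * ν i = -∑ i ∈ Icc 1 j, a i * μ i := by
    intro j hj
    rw [← Finset.sum_neg_distrib]
    refine Finset.sum_congr rfl fun i hi => ?_
    rw [mem_Icc] at hi
    exact hρν i hi.1 (hi.2.trans hj)
  -- expressions for δ k, δ (k+1), Δ (k+1)
  have hδk : δ k = (∑ i ∈ Icc 1 k, a i * μ i) / (∑ i ∈ Icc 1 k, a i)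
      + (∑ i ∈ Icc 1 k, a i * μ i) / (∑ i ∈ Icc 1 k, ρ i) := by
    rw [hδ, hΥ, hΨ, hs, ht, hsumρν k (by omega), neg_div]; ring
  have hδκ : δ (k+1) =
      ((∑ i ∈ Icc 1 k, a i * μ i) + a (k+1) * μ (k+1)) / ((∑ i ∈ Icc 1 k, a i) + a (k+1))
      + ((∑ i ∈ Icc 1 k, a i * μ i) + a (k+1) * μ (k+1)) / ((∑ i ∈ Icc 1 k, ρ i) + ρ (k+1)) := by
    rw [hδ, hΥ, hΨ, hs, ht, hsumρν (k+1) le_rfl, neg_div, hsplit a, hsplit ρ,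
      hsplit (fun i => a i * μ i)]
    ring
  have hΔκ : Δ (k+1) = (a (k+1) * μ (k+1)) / a (k+1) + (a (k+1) * μ (k+1)) / ρ (k+1) := by
    rw [hΔ]
    have h1 : a (k+1) * μ (k+1) / a (k+1) = μ (k+1) := by
      field_simp
    have h2 : a (k+1) * μ (k+1) / ρ (k+1) = -ν (k+1) := by
      rw [div_eq_iff hρk.ne']
      have h3 := hρν (k+1) (by omega) le_rfl
      linear_combination h3
    rw [h1, h2]; ring
  have hsκ : s (k+1) = (∑ i ∈ Icc 1 k, a i) + a (k+1) := by rw [hs]; exact hsplit a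
  have htκ : t (k+1) = (∑ i ∈ Icc 1 k, ρ i) + ρ (k+1) := by rw [ht]; exact hsplit ρ
  rw [hδk, hδκ, hΔκ, hsκ, htκ]
  exact core _ _ _ _ _ _ hA hB hS' hT' hak hρk
end

section
/- Let r ≥ 1 be an integer, let b_1, …, b_r be positive real numbers, let 0 > ν_1 > ν_2 > ⋯ > ν_r be real numbers, and let γ_1, …, γ_r be real numbers with Σ_{j=1}^{i} γ_j ≤ 0 for every 1 ≤ i ≤ r and Σ_{j=1}^{r} γ_j = 0. Set ρ_i = b_i − γ_i/ν_i and assume ρ_i > 0 for every i. Then Σ_{i=1}^{r} ρ_i ≤ Σ_{i=1}^{r} b_i, and (Σ_{i=1}^{r} ν_i b_i)/(Σ_{i=1}^{r} b_i) ≥ (Σ_{i=1}^{r} ν_iρ_i)/(Σ_{i=1}^{r} ρ_i), with equality if and only if γ_1 = γ_2 = ⋯ = γ_r = 0. -/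
/-!
Write `Γᵢ = γ₁ + ⋯ + γᵢ`. Since `ν ρ = ν b - γ` and `Γ_r = 0`, the numerators `∑ νᵢ bᵢ` and
`∑ νᵢ ρᵢ` coincide and are negative, while `∑ bᵢ - ∑ ρᵢ = ∑ γᵢ / νᵢ`. Summation by parts with
`Γ_r = 0` gives `∑ γᵢ / νᵢ = ∑_{i<r} Γᵢ (1/νᵢ - 1/νᵢ₊₁)`: each term is a product of two
nonpositive factors, the second one nonzero because `1/ν` is strictly increasing. So the sum is
nonnegative and vanishes exactly when all `Γᵢ`, i.e. all `γᵢ`, vanish; dividing the common negative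
numerator by the smaller denominator `∑ ρᵢ` then gives the smaller slope.
-/

open Finset

theorem sum_Icc_mul_eq_by_parts {R : Type*} [CommRing R] (γ w : ℕ → R) (n : ℕ) :
    ∑ i ∈ Icc 1 n, γ i * w i =
      (∑ j ∈ Icc 1 n, γ j) * w n - ∑ i ∈ Ico 1 n, (∑ j ∈ Icc 1 i, γ j) * (w (i + 1) - w i) := by
  induction n with
  | zero => simp
  | succ n ih =>
    rw [sum_Icc_succ_top (by omega), sum_Icc_succ_top (by omega), ih]
    rcases Nat.eq_zero_or_pos n with rfl | hn
    · simp
    · rw [sum_Ico_succ_top hn]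
      ring

theorem sum_Icc_mul_eq_sum_partialSum_mul {R : Type*} [CommRing R] {γ : ℕ → R} {n : ℕ}
    (w : ℕ → R) (htot : ∑ j ∈ Icc 1 n, γ j = 0) :
    ∑ i ∈ Icc 1 n, γ i * w i = ∑ i ∈ Ico 1 n, (∑ j ∈ Icc 1 i, γ j) * (w i - w (i + 1)) := by
  rw [sum_Icc_mul_eq_by_parts, htot, zero_mul, zero_sub, ← sum_neg_distrib]
  exact sum_congr rfl fun i _ => by ring

theorem eq_zero_of_sum_Icc_eq_zero {M : Type*} [AddCommMonoid M] {γ : ℕ → M} {n : ℕ}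
    (hG : ∀ i ∈ Icc 1 n, ∑ j ∈ Icc 1 i, γ j = 0) : ∀ i ∈ Icc 1 n, γ i = 0 := by
  intro i hi
  obtain ⟨hi1, hin⟩ := mem_Icc.1 hi
  obtain ⟨k, rfl⟩ := Nat.exists_eq_add_of_le' hi1
  have hGk : ∑ j ∈ Icc 1 k, γ j = 0 := by
    rcases Nat.eq_zero_or_pos k with rfl | hk
    · simp
    · exact hG k (mem_Icc.2 ⟨hk, by omega⟩)
  have := hG (k + 1) hi
  rwa [sum_Icc_succ_top (by omega), hGk, zero_add] at this

theorem div_le_div_of_nonpos_left {K : Type*} [Field K] [LinearOrder K] [IsStrictOrderedRing K]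
    {a b c : K} (ha : a ≤ 0) (hb : 0 < b) (hbc : b ≤ c) : a / b ≤ a / c := by
  rw [div_eq_mul_inv, div_eq_mul_inv]
  exact mul_le_mul_of_nonpos_left (inv_anti₀ hb hbc) ha

section PartialSums

variable {R : Type*} [CommRing R] [LinearOrder R] [IsStrictOrderedRing R] {γ w : ℕ → R} {n : ℕ}

theorem partialSum_mul_sub_nonneg (hw : MonotoneOn w (Icc 1 n))
    (hG : ∀ i ∈ Icc 1 n, ∑ j ∈ Icc 1 i, γ j ≤ 0) :
    ∀ i ∈ Ico 1 n, 0 ≤ (∑ j ∈ Icc 1 i, γ j) * (w i - w (i + 1)) := by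
  intro i hi
  obtain ⟨hi1, hin⟩ := mem_Ico.1 hi
  exact mul_nonneg_of_nonpos_of_nonpos (hG i (mem_Icc.2 ⟨hi1, hin.le⟩))
    (sub_nonpos.2 (hw (mem_Icc.2 ⟨hi1, hin.le⟩) (mem_Icc.2 ⟨by omega, hin⟩) (by omega)))

theorem sum_Icc_mul_nonneg_of_partialSum_nonpos (hw : MonotoneOn w (Icc 1 n))
    (hG : ∀ i ∈ Icc 1 n, ∑ j ∈ Icc 1 i, γ j ≤ 0) (htot : ∑ j ∈ Icc 1 n, γ j = 0) :
    0 ≤ ∑ i ∈ Icc 1 n, γ i * w i := by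
  rw [sum_Icc_mul_eq_sum_partialSum_mul w htot]
  exact sum_nonneg (partialSum_mul_sub_nonneg hw hG)

theorem sum_Icc_mul_eq_zero_iff_of_partialSum_nonpos (hw : StrictMonoOn w (Icc 1 n))
    (hG : ∀ i ∈ Icc 1 n, ∑ j ∈ Icc 1 i, γ j ≤ 0) (htot : ∑ j ∈ Icc 1 n, γ j = 0) :
    ∑ i ∈ Icc 1 n, γ i * w i = 0 ↔ ∀ i ∈ Icc 1 n, γ i = 0 := by
  refine ⟨fun hzero => eq_zero_of_sum_Icc_eq_zero fun i hi => ?_,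
    fun h => sum_eq_zero fun i hi => by rw [h i hi, zero_mul]⟩
  rw [sum_Icc_mul_eq_sum_partialSum_mul w htot,
    sum_eq_zero_iff_of_nonneg (partialSum_mul_sub_nonneg hw.monotoneOn hG)] at hzero
  obtain ⟨hi1, hin⟩ := mem_Icc.1 hi
  rcases hin.lt_or_eq with hin | rfl
  · have hgap : w i - w (i + 1) < 0 :=
      sub_neg.2 (hw (mem_Icc.2 ⟨hi1, hin.le⟩) (mem_Icc.2 ⟨by omega, hin⟩) (by omega))
    exact (mul_eq_zero.1 (hzero i (mem_Ico.2 ⟨hi1, hin⟩))).resolve_right hgap.ne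
  · exact htot

end PartialSums

theorem stmt_6_general (r : ℕ) (hr : 1 ≤ r)
    (b ν γ ρ : ℕ → ℝ)
    (hνneg : ν 1 < 0)
    (hν : ∀ i j, 1 ≤ i → i < j → j ≤ r → ν j < ν i)
    (hγpartial : ∀ i, 1 ≤ i → i ≤ r → ∑ j ∈ Finset.Icc 1 i, γ j ≤ 0)
    (hγtotal : ∑ j ∈ Finset.Icc 1 r, γ j = 0)
    (hρdef : ∀ i, ρ i = b i - γ i / ν i)
    (hρpos : ∀ i, 1 ≤ i → i ≤ r → 0 < ρ i) :
    (∑ i ∈ Finset.Icc 1 r, ρ i) ≤ (∑ i ∈ Finset.Icc 1 r, b i)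
    ∧ (∑ i ∈ Finset.Icc 1 r, ν i * b i) / (∑ i ∈ Finset.Icc 1 r, b i)
        ≥ (∑ i ∈ Finset.Icc 1 r, ν i * ρ i) / (∑ i ∈ Finset.Icc 1 r, ρ i)
    ∧ ((∑ i ∈ Finset.Icc 1 r, ν i * b i) / (∑ i ∈ Finset.Icc 1 r, b i)
          = (∑ i ∈ Finset.Icc 1 r, ν i * ρ i) / (∑ i ∈ Finset.Icc 1 r, ρ i)
        ↔ ∀ i, 1 ≤ i → i ≤ r → γ i = 0) := by
  have hν_neg : ∀ i ∈ Icc 1 r, ν i < 0 := fun i hi => by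
    obtain ⟨hi1, hir⟩ := mem_Icc.1 hi
    rcases hi1.eq_or_lt with rfl | hi1
    exacts [hνneg, (hν 1 i le_rfl hi1 hir).trans hνneg]
  have hρ_pos : ∀ i ∈ Icc 1 r, 0 < ρ i := fun i hi => hρpos i (mem_Icc.1 hi).1 (mem_Icc.1 hi).2
  have hG : ∀ i ∈ Icc 1 r, ∑ j ∈ Icc 1 i, γ j ≤ 0 := fun i hi =>
    hγpartial i (mem_Icc.1 hi).1 (mem_Icc.1 hi).2
  have hw : StrictMonoOn (fun i => (ν i)⁻¹) (Icc 1 r) := fun i hi j hj hij =>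
    (inv_lt_inv_of_neg (hν_neg i hi) (hν_neg j hj)).2 (hν i j (mem_Icc.1 hi).1 hij (mem_Icc.1 hj).2)
  set S := ∑ i ∈ Icc 1 r, γ i * (ν i)⁻¹
  have hS : 0 ≤ S := sum_Icc_mul_nonneg_of_partialSum_nonpos hw.monotoneOn hG hγtotal
  have hρ_sum : ∑ i ∈ Icc 1 r, ρ i = ∑ i ∈ Icc 1 r, b i - S := by
    simp only [hρdef, div_eq_mul_inv, sum_sub_distrib, S]
  have hνρ_sum : ∑ i ∈ Icc 1 r, ν i * ρ i = ∑ i ∈ Icc 1 r, ν i * b i := by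
    have hνρ : ∀ i ∈ Icc 1 r, ν i * ρ i = ν i * b i - γ i := fun i hi => by
      rw [hρdef, mul_sub, mul_div_cancel₀ _ (hν_neg i hi).ne]
    rw [sum_congr rfl hνρ, sum_sub_distrib, hγtotal, sub_zero]
  have hnonempty : (Icc 1 r).Nonempty := ⟨1, mem_Icc.2 ⟨le_rfl, hr⟩⟩
  have hP : 0 < ∑ i ∈ Icc 1 r, ρ i := sum_pos hρ_pos hnonempty
  have hN : ∑ i ∈ Icc 1 r, ν i * ρ i < 0 :=
    sum_neg (fun i hi => mul_neg_of_neg_of_pos (hν_neg i hi) (hρ_pos i hi)) hnonempty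
  have hρ_le_b : ∑ i ∈ Icc 1 r, ρ i ≤ ∑ i ∈ Icc 1 r, b i := by linarith
  refine ⟨hρ_le_b, ?_, ?_⟩
  · rw [← hνρ_sum]
    exact div_le_div_of_nonpos_left hN.le hP hρ_le_b
  · rw [← hνρ_sum, div_eq_mul_inv, div_eq_mul_inv, mul_right_inj' hN.ne, inv_inj, hρ_sum,
      eq_comm, sub_eq_self, sum_Icc_mul_eq_zero_iff_of_partialSum_nonpos hw hG hγtotal]
    simp only [mem_Icc, and_imp]

/-- Numerical core of Claim 6.8 in the proof of Theorem 6.4. Pieces are indexed by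
`1, …, r`. -/
theorem stmt_6 (r : ℕ) (hr : 1 ≤ r)
    (b ν γ ρ : ℕ → ℝ)
    (hb : ∀ i, 1 ≤ i → i ≤ r → 0 < b i)
    (hνneg : ν 1 < 0)
    (hν : ∀ i j, 1 ≤ i → i < j → j ≤ r → ν j < ν i)
    (hγpartial : ∀ i, 1 ≤ i → i ≤ r → ∑ j ∈ Finset.Icc 1 i, γ j ≤ 0)
    (hγtotal : ∑ j ∈ Finset.Icc 1 r, γ j = 0)
    (hρdef : ∀ i, ρ i = b i - γ i / ν i)
    (hρpos : ∀ i, 1 ≤ i → i ≤ r → 0 < ρ i) :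
    (∑ i ∈ Finset.Icc 1 r, ρ i) ≤ (∑ i ∈ Finset.Icc 1 r, b i)
    ∧ (∑ i ∈ Finset.Icc 1 r, ν i * b i) / (∑ i ∈ Finset.Icc 1 r, b i)
        ≥ (∑ i ∈ Finset.Icc 1 r, ν i * ρ i) / (∑ i ∈ Finset.Icc 1 r, ρ i)
    ∧ ((∑ i ∈ Finset.Icc 1 r, ν i * b i) / (∑ i ∈ Finset.Icc 1 r, b i)
          = (∑ i ∈ Finset.Icc 1 r, ν i * ρ i) / (∑ i ∈ Finset.Icc 1 r, ρ i)
        ↔ ∀ i, 1 ≤ i → i ≤ r → γ i = 0) :=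
  stmt_6_general r hr b ν γ ρ hνneg hν hγpartial hγtotal hρdef hρpos
end
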